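/- Let Ω be a finite probability space with binary random variables Ŷ, Y, S : Ω → {0,1}, with all events (S=s, Y=y) of positive probability, and suppose Ŷ satisfies equalized odds with respect to Y and S. If Ŷ is independent of Y conditionally on S=1, i.e. P(Ŷ=ŷ | S=1, Y=0) = P(Ŷ=ŷ | S=1, Y=1) for all ŷ, then for every attack a : {0,1} → {0,1}, ½(P(a∘Ŷ=0 | S=0) + P(a∘Ŷ=1 | S=1)) = ½. -/

import Mathlib

open scoped Classical
noncomputable section

/-- Probability of an event under weight function `p` on a finite sample space. -/
def Pr {Omega : Type*} [Fintype Omega] (p : Omega → ℝ) (A : Omega → Prop) : ℝ :=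
  ∑ ω, if A ω then p ω else 0

/-- Conditional probability `P(A | B)`. -/
def cPr {Omega : Type*} [Fintype Omega] (p : Omega → ℝ) (A B : Omega → Prop) : ℝ :=
  Pr p (fun ω => A ω ∧ B ω) / Pr p B

/-!
Equalized odds together with the conditional independence at `S = 1` make
`P(Ŷ = ŷ | S = s, Y = y)` independent of both `s` and `y`; by the law of total probability,
`Ŷ` then has one and the same conditional distribution `c` given `S = 0` and given `S = 1`.
An attack `a` splits the values of `Ŷ` into `a⁻¹ 0` and `a⁻¹ 1`, so the two accuracies add up
to `∑ ŷ, c ŷ = 1`.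
-/

section ConditionalProbability

variable {Omega : Type*} [Fintype Omega] (p : Omega → ℝ)

lemma Pr_congr {A B : Omega → Prop} (h : ∀ ω, A ω ↔ B ω) : Pr p A = Pr p B :=
  congrArg (Pr p) (funext fun ω => propext (h ω))

lemma Pr_eq_sum_Pr_and_eq {α : Type*} [Fintype α] (X : Omega → α) (A : Omega → Prop) :
    Pr p A = ∑ x, Pr p (fun ω => A ω ∧ X ω = x) := by
  unfold Pr
  rw [Finset.sum_comm]
  refine Finset.sum_congr rfl fun ω _ => ?_
  by_cases hA : A ω <;> simp [hA]

lemma sum_cPr_eq_one {α : Type*} [Fintype α] (X : Omega → α) {B : Omega → Prop}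
    (hB : Pr p B ≠ 0) : ∑ x, cPr p (fun ω => X ω = x) B = 1 := by
  unfold cPr
  rw [← Finset.sum_div, div_eq_one_iff_eq hB, Pr_eq_sum_Pr_and_eq p X B]
  exact Finset.sum_congr rfl fun x _ => Pr_congr p fun ω => and_comm

lemma cPr_comp_eq_sum {α β : Type*} [Fintype α] (X : Omega → α) (f : α → β) (v : β)
    (B : Omega → Prop) :
    cPr p (fun ω => f (X ω) = v) B = ∑ x with f x = v, cPr p (fun ω => X ω = x) B := by
  unfold cPr
  rw [← Finset.sum_div, Finset.sum_filter, Pr_eq_sum_Pr_and_eq p X]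
  congr 1
  refine Finset.sum_congr rfl fun x _ => ?_
  split_ifs with hx
  · exact Pr_congr p fun ω => ⟨fun h => ⟨h.2, h.1.2⟩, fun h => ⟨⟨by simp only [h.1, hx], h.2⟩, h.1⟩⟩
  · exact Finset.sum_eq_zero fun ω _ => if_neg fun h => hx (by rw [← h.2]; exact h.1.1)

lemma cPr_eq_of_forall_cPr_and_eq {α : Type*} [Fintype α] (Y : Omega → α)
    {A B : Omega → Prop} {c : ℝ} (hB : Pr p B ≠ 0)
    (hY : ∀ y, Pr p (fun ω => B ω ∧ Y ω = y) ≠ 0)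
    (h : ∀ y, cPr p A (fun ω => B ω ∧ Y ω = y) = c) : cPr p A B = c := by
  have hfiber : ∀ y, Pr p (fun ω => A ω ∧ B ω ∧ Y ω = y) = c * Pr p (fun ω => B ω ∧ Y ω = y) :=
    fun y => by rw [← h y, cPr, div_mul_cancel₀ _ (hY y)]
  rw [cPr, div_eq_iff hB, Pr_eq_sum_Pr_and_eq p Y, Pr_eq_sum_Pr_and_eq p Y B, Finset.mul_sum]
  exact Finset.sum_congr rfl fun y _ => (Pr_congr p fun ω => and_assoc).trans (hfiber y)

lemma cPr_comp_zero_add_cPr_comp_one {α : Type*} [Fintype α] (X : Omega → α) (a : α → Fin 2)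
    {B₀ B₁ : Omega → Prop} (hB₀ : Pr p B₀ ≠ 0)
    (h : ∀ x, cPr p (fun ω => X ω = x) B₁ = cPr p (fun ω => X ω = x) B₀) :
    cPr p (fun ω => a (X ω) = 0) B₀ + cPr p (fun ω => a (X ω) = 1) B₁ = 1 := by
  have h_one_iff : ∀ i : Fin 2, i = 1 ↔ ¬ i = 0 := by decide
  rw [cPr_comp_eq_sum, cPr_comp_eq_sum]
  simp only [h, h_one_iff]
  rw [Finset.sum_filter_add_sum_filter_not, sum_cPr_eq_one p X hB₀]

end ConditionalProbability

theorem stmt_11_general {Omega : Type*} [Fintype Omega] (p : Omega → ℝ)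
    (Yh Y S : Omega → Fin 2)
    (hpos : ∀ s y : Fin 2, 0 < Pr p (fun ω => S ω = s ∧ Y ω = y))
    (heo : ∀ yh y : Fin 2,
        cPr p (fun ω => Yh ω = yh) (fun ω => S ω = 0 ∧ Y ω = y)
          = cPr p (fun ω => Yh ω = yh) (fun ω => S ω = 1 ∧ Y ω = y))
    (hci : ∀ yh : Fin 2,
        cPr p (fun ω => Yh ω = yh) (fun ω => S ω = 1 ∧ Y ω = 0)
          = cPr p (fun ω => Yh ω = yh) (fun ω => S ω = 1 ∧ Y ω = 1)) :
    ∀ a : Fin 2 → Fin 2,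
      (cPr p (fun ω => a (Yh ω) = 0) (fun ω => S ω = 0)
        + cPr p (fun ω => a (Yh ω) = 1) (fun ω => S ω = 1)) / 2 = 1 / 2 := by
  intro a
  have hS : ∀ s, Pr p (fun ω => S ω = s) ≠ 0 := fun s => by
    rw [Pr_eq_sum_Pr_and_eq p Y]
    exact (Finset.sum_pos (fun y _ => hpos s y) Finset.univ_nonempty).ne'
  have hcell : ∀ yh s y, cPr p (fun ω => Yh ω = yh) (fun ω => S ω = s ∧ Y ω = y)
      = cPr p (fun ω => Yh ω = yh) (fun ω => S ω = 1 ∧ Y ω = 1) := by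
    intro yh s y
    fin_cases s <;> fin_cases y
    exacts [(heo yh 0).trans (hci yh), heo yh 1, hci yh, rfl]
  have hmarg : ∀ yh s, cPr p (fun ω => Yh ω = yh) (fun ω => S ω = s)
      = cPr p (fun ω => Yh ω = yh) (fun ω => S ω = 1 ∧ Y ω = 1) := fun yh s =>
    cPr_eq_of_forall_cPr_and_eq p Y (hS s) (fun y => (hpos s y).ne') (hcell yh s)
  rw [cPr_comp_zero_add_cPr_comp_one p Yh a (hS 0) fun yh => (hmarg yh 1).trans (hmarg yh 0).symm]

theorem stmt_11 {Omega : Type*} [Fintype Omega] (p : Omega → ℝ)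
    (hp : ∀ ω, 0 ≤ p ω) (hsum : ∑ ω, p ω = 1)
    (Yh Y S : Omega → Fin 2)
    (hpos : ∀ s y : Fin 2, 0 < Pr p (fun ω => S ω = s ∧ Y ω = y))
    (heo : ∀ yh y : Fin 2,
        cPr p (fun ω => Yh ω = yh) (fun ω => S ω = 0 ∧ Y ω = y)
          = cPr p (fun ω => Yh ω = yh) (fun ω => S ω = 1 ∧ Y ω = y))
    (hci : ∀ yh : Fin 2,
        cPr p (fun ω => Yh ω = yh) (fun ω => S ω = 1 ∧ Y ω = 0)
          = cPr p (fun ω => Yh ω = yh) (fun ω => S ω = 1 ∧ Y ω = 1)) :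
    ∀ a : Fin 2 → Fin 2,
      (cPr p (fun ω => a (Yh ω) = 0) (fun ω => S ω = 0)
        + cPr p (fun ω => a (Yh ω) = 1) (fun ω => S ω = 1)) / 2 = 1 / 2 :=
  stmt_11_general p Yh Y S hpos heo hci
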